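/- Let ℓ be a nonnegative integer. Define 𝔊(x,y,z) = Q_{4ℓ+3}(x,y)·sin z − Q_{4ℓ+3}(x,z)·sin y + Q_{4ℓ+3}(z,x)·cos y + Q_{4ℓ+3}(y,x)·cos z, and let V be the vector field on ℝ³ given by V(x,y,z) = (𝔊(x,y,z), 𝔊(y,z,x), 𝔊(z,x,y)). Then V satisfies the Beltrami equation ∇×V = V. -/

import Mathlib

noncomputable section

open Real

/-- The standard harmonic polynomial `P_n(x,y) = Re((x+iy)^n)`. -/
def polyP (n : ℕ) (x y : ℝ) : ℝ := ((x + y * Complex.I) ^ n).re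

/-- The standard harmonic polynomial `Q_n(x,y) = Im((x+iy)^n)`. -/
def polyQ (n : ℕ) (x y : ℝ) : ℝ := ((x + y * Complex.I) ^ n).im

/-- Partial derivative in the `i`-th coordinate direction. -/
def pd (i : Fin 3) (F : (Fin 3 → ℝ) → ℝ) : (Fin 3 → ℝ) → ℝ :=
  fun v => deriv (fun t => F (Function.update v i t)) (v i)

/-- Divergence of a vector field on ℝ³. -/
def div3 (V : (Fin 3 → ℝ) → (Fin 3 → ℝ)) : (Fin 3 → ℝ) → ℝ :=
  fun v => pd 0 (fun w => V w 0) v + pd 1 (fun w => V w 1) v + pd 2 (fun w => V w 2) v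

/-- Curl of a vector field on ℝ³. -/
def curl3 (V : (Fin 3 → ℝ) → (Fin 3 → ℝ)) : (Fin 3 → ℝ) → (Fin 3 → ℝ) :=
  fun v => ![pd 1 (fun w => V w 2) v - pd 2 (fun w => V w 1) v,
             pd 2 (fun w => V w 0) v - pd 0 (fun w => V w 2) v,
             pd 0 (fun w => V w 1) v - pd 1 (fun w => V w 0) v]

/-- Laplacian of a scalar function on ℝ³. -/
def lap3 (F : (Fin 3 → ℝ) → ℝ) : (Fin 3 → ℝ) → ℝ :=
  fun v => pd 0 (pd 0 F) v + pd 1 (pd 1 F) v + pd 2 (pd 2 F) v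

/-!
With `Q = Q_{n+1}` one has `∂ₓQ(x,y) = (n+1) Q_n(x,y)` and `∂_y Q(x,y) = (n+1) P_n(x,y)`, so each
component of `∇×V - V` is a combination of `Q_n(y,x) - Q_n(x,y)` and `P_n(y,x) + P_n(x,y)`. Since
`y + ix = i · conj(x + iy)`, both vanish when `i^n = -1`, i.e. for `n = 4ℓ+2`. The field is
invariant under cyclic permutation of the coordinates, so one component suffices.
-/

section HarmonicPolynomials

open Complex ComplexConjugate

lemma hasDerivAt_polyQ_fst (n : ℕ) (x y : ℝ) :
    HasDerivAt (fun x => polyQ (n + 1) x y) ((n + 1) * polyQ n x y) x := by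
  have h : HasDerivAt (fun w : ℂ => (w + y * I) ^ (n + 1)) ((n + 1 : ℕ) * (x + y * I) ^ n) x := by
    simpa using ((hasDerivAt_id (x : ℂ)).add_const (y * I)).fun_pow (n + 1)
  simpa [polyQ, Function.comp_def] using imCLM.hasFDerivAt.comp_hasDerivAt x h.comp_ofReal

lemma hasDerivAt_polyQ_snd (n : ℕ) (x y : ℝ) :
    HasDerivAt (fun y => polyQ (n + 1) x y) ((n + 1) * polyP n x y) y := by
  have h : HasDerivAt (fun w : ℂ => (x + w * I) ^ (n + 1))
      ((n + 1 : ℕ) * (x + y * I) ^ n * I) y := by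
    simpa using (((hasDerivAt_id (y : ℂ)).mul_const I).const_add (x : ℂ)).fun_pow (n + 1)
  simpa [polyQ, polyP, Function.comp_def] using
    imCLM.hasFDerivAt.comp_hasDerivAt y h.comp_ofReal

lemma ofReal_add_mul_I_swap_pow (n : ℕ) (x y : ℝ) :
    ((y : ℂ) + x * I) ^ n = I ^ n * conj (((x : ℂ) + y * I) ^ n) := by
  rw [map_pow, ← mul_pow]
  congr 1
  apply Complex.ext <;> simp

lemma I_pow_four_mul_add_two (l : ℕ) : I ^ (4 * l + 2) = -1 := by
  rw [pow_add, pow_mul, I_pow_four, one_pow, I_sq, one_mul]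

lemma polyQ_four_mul_add_two_swap (l : ℕ) (x y : ℝ) :
    polyQ (4 * l + 2) y x = polyQ (4 * l + 2) x y := by
  rw [polyQ, polyQ, ofReal_add_mul_I_swap_pow, I_pow_four_mul_add_two, neg_one_mul, neg_im,
    conj_im, neg_neg]

lemma polyP_four_mul_add_two_swap (l : ℕ) (x y : ℝ) :
    polyP (4 * l + 2) y x = -polyP (4 * l + 2) x y := by
  rw [polyP, polyP, ofReal_add_mul_I_swap_pow, I_pow_four_mul_add_two, neg_one_mul, neg_re,
    conj_re]

end HarmonicPolynomials

def octahedralProfile (n : ℕ) (x y z : ℝ) : ℝ :=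
  polyQ n x y * sin z - polyQ n x z * sin y + polyQ n z x * cos y + polyQ n y x * cos z

lemma hasDerivAt_octahedralProfile_snd (n : ℕ) (x y z : ℝ) :
    HasDerivAt (fun y => octahedralProfile (n + 1) x y z)
      ((n + 1) * polyP n x y * sin z - polyQ (n + 1) x z * cos y - polyQ (n + 1) z x * sin y
        + (n + 1) * polyQ n y x * cos z) y :=
  (((((hasDerivAt_polyQ_snd n x y).mul_const (sin z)).sub
      ((hasDerivAt_sin y).const_mul (polyQ (n + 1) x z))).add
    ((hasDerivAt_cos y).const_mul (polyQ (n + 1) z x))).add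
    ((hasDerivAt_polyQ_fst n y x).mul_const (cos z))).congr_deriv (by ring)

lemma hasDerivAt_octahedralProfile_thd (n : ℕ) (x y z : ℝ) :
    HasDerivAt (fun z => octahedralProfile (n + 1) x y z)
      (polyQ (n + 1) x y * cos z - (n + 1) * polyP n x z * sin y
        + (n + 1) * polyQ n z x * cos y - polyQ (n + 1) y x * sin z) z :=
  (((((hasDerivAt_sin z).const_mul (polyQ (n + 1) x y)).sub
      ((hasDerivAt_polyQ_snd n x z).mul_const (sin y))).add
    ((hasDerivAt_polyQ_fst n z x).mul_const (cos y))).add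
    ((hasDerivAt_cos z).const_mul (polyQ (n + 1) y x))).congr_deriv (by ring)

lemma curl_component_octahedralProfile (l : ℕ) (a b c : ℝ) :
    deriv (fun t => octahedralProfile (4 * l + 3) c a t) b
      - deriv (fun t => octahedralProfile (4 * l + 3) b t a) c
      = octahedralProfile (4 * l + 3) a b c := by
  rw [(hasDerivAt_octahedralProfile_thd (4 * l + 2) c a b).deriv,
    (hasDerivAt_octahedralProfile_snd (4 * l + 2) b c a).deriv,
    polyQ_four_mul_add_two_swap l b c, polyP_four_mul_add_two_swap l b c, octahedralProfile]
  ring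

/-- the octahedral field of order `4ℓ+3` satisfies `∇×V = V`. -/
theorem beltrami_octahedral_first (l : ℕ) :
    let G : ℝ → ℝ → ℝ → ℝ := fun x y z =>
      polyQ (4 * l + 3) x y * Real.sin z - polyQ (4 * l + 3) x z * Real.sin y
        + polyQ (4 * l + 3) z x * Real.cos y + polyQ (4 * l + 3) y x * Real.cos z
    let V : (Fin 3 → ℝ) → (Fin 3 → ℝ) := fun v =>
      ![G (v 0) (v 1) (v 2), G (v 1) (v 2) (v 0), G (v 2) (v 0) (v 1)]
    ∀ v, curl3 V v = V v := by
  intro G V v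
  ext i
  -- `pd` of a coordinate of `V` unfolds definitionally to a derivative of `octahedralProfile`
  fin_cases i
  exacts [curl_component_octahedralProfile l (v 0) (v 1) (v 2),
    curl_component_octahedralProfile l (v 1) (v 2) (v 0),
    curl_component_octahedralProfile l (v 2) (v 0) (v 1)]
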